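/- Let f ∈ H, δ > 0, 0 ≤ k ≤ m, and let Z = (Z_1,…,Z_m) be independent square-integrable real random variables with E[Z_l] = 0 and E[Z_l²] = 1. Set g^δ := K_m f + δZ ∈ ℝᵐ, f_k^δ := Σ_{j=1}^k σ_j⁻¹ (g^δ, u_j)_{ℝᵐ} v_j, and f_m := Σ_{j=1}^m ⟨f, v_j⟩ v_j. Then E[‖f_k^δ − f‖²] = δ²·Σ_{j=1}^k σ_j⁻² + Σ_{j=k+1}^m ⟨f, v_j⟩² + ‖f_m − f‖². -/

import Mathlib

/-!
The error of the cut-off estimator splits as the bias `∑_{j<k} ⟨f, v_j⟩ v_j - f` plus the noise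
`∑_{j<k} W_j v_j`, where `W_j = δ σ_j⁻¹ ∑_l u_{jl} Z_l` by the adjoint relation for `K_m`.
Independence makes the `Z_l` orthonormal in `L²(μ)`, so the `W_j` are centred with
`E[W_j²] = δ² σ_j⁻²` (the `u_j` are unit vectors): the cross term has mean zero and the noise
contributes `δ² ∑_{j<k} σ_j⁻²`. The bias is `(f_m - f) - ∑_{j≥k} ⟨f, v_j⟩ v_j` with
`f_m - f ⟂ v_j`, so Pythagoras splits its square into `‖f_m - f‖²` and `∑_{j≥k} ⟨f, v_j⟩²`.
-/

open MeasureTheory ProbabilityTheory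
open scoped RealInnerProductSpace

section Noise

variable {Ω κ : Type*} [MeasurableSpace Ω] {μ : Measure Ω} {Z : κ → Ω → ℝ}

theorem integral_mul_eq_ite_of_iIndepFun [DecidableEq κ] [IsProbabilityMeasure μ]
    (hZ : iIndepFun Z μ) (hZsq : ∀ l, MemLp (Z l) 2 μ) (hmean : ∀ l, ∫ ω, Z l ω ∂μ = 0)
    (hvar : ∀ l, ∫ ω, Z l ω ^ 2 ∂μ = 1) (l l' : κ) :
    ∫ ω, Z l ω * Z l' ω ∂μ = if l = l' then 1 else 0 := by
  rcases eq_or_ne l l' with rfl | hne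
  · simpa [sq] using hvar l
  · rw [if_neg hne, (hZ.indepFun hne).integral_fun_mul_eq_mul_integral
      (hZsq l).aestronglyMeasurable (hZsq l').aestronglyMeasurable, hmean, zero_mul]

variable [Fintype κ]

theorem integral_sum_mul_eq_zero (hZ : ∀ l, Integrable (Z l) μ)
    (hmean : ∀ l, ∫ ω, Z l ω ∂μ = 0) (a : κ → ℝ) :
    ∫ ω, ∑ l, a l * Z l ω ∂μ = 0 := by
  rw [integral_finsetSum _ fun l _ => (hZ l).const_mul _]
  simp [integral_const_mul, hmean]

theorem integral_sum_mul_sq [DecidableEq κ] (hZ : ∀ l, MemLp (Z l) 2 μ)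
    (hcov : ∀ l l', ∫ ω, Z l ω * Z l' ω ∂μ = if l = l' then 1 else 0) (a : κ → ℝ) :
    ∫ ω, (∑ l, a l * Z l ω) ^ 2 ∂μ = ∑ l, a l ^ 2 := by
  have hint : ∀ l l', Integrable (fun ω => a l * a l' * (Z l ω * Z l' ω)) μ := fun l l' =>
    ((hZ l).integrable_mul (hZ l')).const_mul _
  calc ∫ ω, (∑ l, a l * Z l ω) ^ 2 ∂μ
      = ∫ ω, ∑ l, ∑ l', a l * a l' * (Z l ω * Z l' ω) ∂μ := by
        congr with ω
        rw [sq, Finset.sum_mul_sum]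
        exact Finset.sum_congr rfl fun l _ => Finset.sum_congr rfl fun l' _ => by ring
    _ = ∑ l, ∑ l', a l * a l' * (if l = l' then 1 else 0) := by
        rw [integral_finsetSum _ fun l _ => integrable_finsetSum _ fun l' _ => hint l l']
        refine Finset.sum_congr rfl fun l _ => ?_
        rw [integral_finsetSum _ fun l' _ => hint l l']
        simp only [integral_const_mul, hcov]
    _ = ∑ l, a l ^ 2 := by simp [sq]

end Noise

section Orthonormal

variable {H ι : Type*} [NormedAddCommGroup H] [InnerProductSpace ℝ H] {v : ι → H}

theorem Orthonormal.norm_add_sum_smul_sq (hv : Orthonormal ℝ v) (b : H) (s : Finset ι)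
    (c : ι → ℝ) :
    ‖b + ∑ j ∈ s, c j • v j‖ ^ 2 = ‖b‖ ^ 2 + 2 * ∑ j ∈ s, c j * ⟪b, v j⟫ + ∑ j ∈ s, c j ^ 2 := by
  rw [norm_add_sq_real, inner_sum, ← real_inner_self_eq_norm_sq (∑ j ∈ s, c j • v j),
    hv.inner_sum]
  simp only [real_inner_smul_right, conj_trivial, sq]

theorem Orthonormal.norm_sum_sub_sq [Fintype ι] [DecidableEq ι] (hv : Orthonormal ℝ v) (f : H)
    (s : Finset ι) :
    ‖∑ j ∈ s, ⟪f, v j⟫ • v j - f‖ ^ 2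
      = ∑ j ∈ sᶜ, ⟪f, v j⟫ ^ 2 + ‖∑ j, ⟪f, v j⟫ • v j - f‖ ^ 2 := by
  have hperp : ∀ j, ⟪∑ j, ⟪f, v j⟫ • v j - f, v j⟫ = 0 := fun j => by
    rw [inner_sub_left, real_inner_comm, hv.inner_right_fintype, real_inner_comm, sub_self]
  have hsplit : ∑ j ∈ s, ⟪f, v j⟫ • v j - f
      = (∑ j, ⟪f, v j⟫ • v j - f) + ∑ j ∈ sᶜ, (-⟪f, v j⟫) • v j := by
    rw [← Finset.sum_add_sum_compl s]
    simp only [neg_smul, Finset.sum_neg_distrib]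
    abel
  rw [hsplit, hv.norm_add_sum_smul_sq]
  simp [hperp, add_comm]

end Orthonormal

theorem integral_norm_add_sum_smul_sq {Ω H ι κ : Type*} [MeasurableSpace Ω] {μ : Measure Ω}
    [IsProbabilityMeasure μ] [NormedAddCommGroup H] [InnerProductSpace ℝ H]
    [Fintype κ] [DecidableEq κ]
    {v : ι → H} (hv : Orthonormal ℝ v) {Z : κ → Ω → ℝ} (hZ : ∀ l, MemLp (Z l) 2 μ)
    (hmean : ∀ l, ∫ ω, Z l ω ∂μ = 0)
    (hcov : ∀ l l', ∫ ω, Z l ω * Z l' ω ∂μ = if l = l' then 1 else 0)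
    (b : H) (s : Finset ι) (a : ι → κ → ℝ) :
    ∫ ω, ‖b + ∑ j ∈ s, (∑ l, a j l * Z l ω) • v j‖ ^ 2 ∂μ
      = ‖b‖ ^ 2 + ∑ j ∈ s, ∑ l, a j l ^ 2 := by
  have hW : ∀ j, MemLp (fun ω => ∑ l, a j l * Z l ω) 2 μ := fun j =>
    memLp_finsetSum _ fun l _ => (hZ l).const_mul (a j l)
  have hlin : Integrable (fun ω => 2 * ∑ j ∈ s, (∑ l, a j l * Z l ω) * ⟪b, v j⟫) μ :=
    (integrable_finsetSum _ fun j _ => ((hW j).integrable one_le_two).mul_const _).const_mul _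
  have hquad : Integrable (fun ω => ∑ j ∈ s, (∑ l, a j l * Z l ω) ^ 2) μ :=
    integrable_finsetSum _ fun j _ => (hW j).integrable_sq
  have hconst_lin : Integrable (fun ω => ‖b‖ ^ 2 + 2 * ∑ j ∈ s, (∑ l, a j l * Z l ω) * ⟪b, v j⟫)
      μ := (integrable_const _).add hlin
  simp_rw [hv.norm_add_sum_smul_sq]
  rw [integral_add hconst_lin hquad, integral_add (integrable_const _) hlin,
    integral_const_mul, integral_finsetSum _ fun j _ => (hW j).integrable_sq,
    integral_finsetSum _ fun j _ => ((hW j).integrable one_le_two).mul_const _]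
  simp [integral_mul_const, integral_sum_mul_eq_zero (fun l => (hZ l).integrable one_le_two) hmean,
    integral_sum_mul_sq hZ hcov]

theorem stmt_3
    {H : Type*} [NormedAddCommGroup H] [InnerProductSpace ℝ H]
    {m : ℕ} (Km : H →L[ℝ] (Fin m → ℝ))
    (v : Fin m → H) (u : Fin m → Fin m → ℝ) (σ : Fin m → ℝ)
    (hv : Orthonormal ℝ v)
    (hu : ∀ i j : Fin m, (∑ l, u i l * u j l) = if i = j then (1:ℝ) else 0)
    (hσpos : ∀ j, 0 < σ j)
    (hKadj : ∀ (j : Fin m) (x : H), (∑ l, Km x l * u j l) = σ j * ⟪x, v j⟫)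
    {Ω : Type*} [MeasurableSpace Ω] {μ : Measure Ω} [IsProbabilityMeasure μ]
    (Z : Fin m → Ω → ℝ)
    (hZindep : iIndepFun Z μ)
    (hZsq : ∀ l, MemLp (Z l) 2 μ)
    (hZmean : ∀ l, (∫ ω, Z l ω ∂μ) = 0)
    (hZvar : ∀ l, (∫ ω, (Z l ω) ^ 2 ∂μ) = 1)
    (f : H) (δ : ℝ) (k : ℕ) :
    (∫ ω, ‖(∑ j ∈ Finset.univ.filter fun j : Fin m => (j : ℕ) < k,
            ((σ j)⁻¹ * ∑ l, (Km f l + δ * Z l ω) * u j l) • v j) - f‖ ^ 2 ∂μ)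
      = δ ^ 2 * (∑ j ∈ Finset.univ.filter fun j : Fin m => (j : ℕ) < k, ((σ j) ^ 2)⁻¹)
        + (∑ j ∈ Finset.univ.filter fun j : Fin m => k ≤ (j : ℕ), ⟪f, v j⟫ ^ 2)
        + ‖(∑ j, ⟪f, v j⟫ • v j) - f‖ ^ 2 := by
  set S : Finset (Fin m) := Finset.univ.filter fun j : Fin m => (j : ℕ) < k
  have hcompl : (Finset.univ.filter fun j : Fin m => k ≤ (j : ℕ)) = Sᶜ := by
    ext j
    simp [S]
  have hcoef : ∀ j ω, (σ j)⁻¹ * ∑ l, (Km f l + δ * Z l ω) * u j l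
      = ⟪f, v j⟫ + ∑ l, δ * (σ j)⁻¹ * u j l * Z l ω := by
    intro j ω
    simp only [add_mul, Finset.sum_add_distrib, hKadj]
    rw [mul_add, inv_mul_cancel_left₀ (hσpos j).ne', Finset.mul_sum]
    exact congrArg _ (Finset.sum_congr rfl fun l _ => by ring)
  have hsplit : ∀ ω, ∑ j ∈ S, ((σ j)⁻¹ * ∑ l, (Km f l + δ * Z l ω) * u j l) • v j - f
      = (∑ j ∈ S, ⟪f, v j⟫ • v j - f) + ∑ j ∈ S, (∑ l, δ * (σ j)⁻¹ * u j l * Z l ω) • v j := by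
    intro ω
    simp only [hcoef, add_smul, Finset.sum_add_distrib]
    abel
  have hnoise : ∀ j, ∑ l, (δ * (σ j)⁻¹ * u j l) ^ 2 = δ ^ 2 * ((σ j) ^ 2)⁻¹ := by
    intro j
    have hunit : ∑ l, u j l * u j l = 1 := by simpa using hu j j
    calc ∑ l, (δ * (σ j)⁻¹ * u j l) ^ 2 = (δ * (σ j)⁻¹) ^ 2 * ∑ l, u j l * u j l := by
          rw [Finset.mul_sum]
          exact Finset.sum_congr rfl fun l _ => by ring
      _ = δ ^ 2 * ((σ j) ^ 2)⁻¹ := by rw [hunit]; ring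
  simp_rw [hsplit]
  rw [integral_norm_add_sum_smul_sq hv hZsq hZmean
      (integral_mul_eq_ite_of_iIndepFun hZindep hZsq hZmean hZvar),
    hv.norm_sum_sub_sq, hcompl, Finset.mul_sum]
  simp only [hnoise]
  ring
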